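/- Assume in addition that φ'(0)·g(0) ≠ 0, let ψ = φ^⟨-1⟩ be the compositional inverse of φ, and let B be an upper triangular matrix satisfying A·B = B·A = I. Then for every nonnegative integer s and all 1 ≤ k ≤ n, [B^s]_{k,n} = (a_k/a_n)·(1/k!)·(d/dt)^n_{t=0}[ (ψ^⟨s⟩(t))^k · ( g(ψ(t))·g(ψ^⟨2⟩(t)) ⋯ g(ψ^⟨s⟩(t)) )^{-1} ], where the empty product (s = 0) equals 1 and the outer inverse is the multiplicative inverse of a power series with nonzero constant term. -/

import Mathlib

/-! Write `M_s` for the matrix on the right-hand side, whose row `k` is generated by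
`F_{s,k} = (ψ^⟨s⟩)^k / (g∘ψ ⋯ g∘ψ^⟨s⟩)`. Since `ψ^⟨s+1⟩ ∘ φ = ψ^⟨s⟩`, composing with `φ` gives
`(F_{s+1,k} ∘ φ) · g = F_{s,k}`, and on coefficients this identity reads `M_{s+1} · A = M_s`.
As `M_0 = I` and `A · B = I`, induction on `s` gives
`B^{s+1} = B^s · B = M_{s+1} · A · B = M_{s+1}`. -/

open PowerSeries Finset

noncomputable section

/-- Product of two infinite matrices of complex numbers (indexed by positive integers,
upper triangular): `[A·B]_{k,n} = ∑_{j=k}^{n} [A]_{k,j}·[B]_{j,n}`. -/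
def triMul (A B : ℕ → ℕ → ℂ) : ℕ → ℕ → ℂ :=
  fun k n => ∑ j ∈ Finset.Icc k n, A k j * B j n

/-- The identity matrix. -/
def triId : ℕ → ℕ → ℂ := fun k n => if k = n then 1 else 0

/-- Powers of a matrix: `A^0 = I`, `A^{s+1} = A^s · A`. -/
def triPow (A : ℕ → ℕ → ℂ) : ℕ → ℕ → ℕ → ℂ
  | 0 => triId
  | s + 1 => triMul (triPow A s) A

/-- Composition `F ∘ G` of formal power series (intended for `G` with zero
constant coefficient): the coefficient of `t^n` is `∑_{j=0}^{n} F_j · [t^n](G^j)`. -/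
def psComp (F G : PowerSeries ℂ) : PowerSeries ℂ :=
  PowerSeries.mk fun n =>
    ∑ j ∈ Finset.range (n + 1), (PowerSeries.coeff j F) * (PowerSeries.coeff n (G ^ j))

/-- Iterated composition: `φ^⟨0⟩ = t`, `φ^⟨s+1⟩ = φ^⟨s⟩ ∘ φ`. -/
def iterComp (φ : PowerSeries ℂ) : ℕ → PowerSeries ℂ
  | 0 => PowerSeries.X
  | s + 1 => psComp (iterComp φ s) φ

namespace PowerSeries

section CommRing

variable {R : Type*} [CommRing R]

theorem coeff_pow_mul_eq_zero_of_lt {G : R⟦X⟧} (hG : constantCoeff G = 0) (H : R⟦X⟧)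
    {n j : ℕ} (h : n < j) : coeff n (G ^ j * H) = 0 := by
  have hdvd : X ^ j ∣ G ^ j * H := (pow_dvd_pow_of_dvd (X_dvd_iff.mpr hG) j).mul_right H
  exact X_pow_dvd_iff.mp hdvd n h

theorem coeff_pow_eq_zero_of_lt {G : R⟦X⟧} (hG : constantCoeff G = 0)
    {n j : ℕ} (h : n < j) : coeff n (G ^ j) = 0 := by
  simpa using coeff_pow_mul_eq_zero_of_lt hG 1 h

theorem coeff_subst_eq_sum_range {G : R⟦X⟧} (hG : constantCoeff G = 0) (F : R⟦X⟧)
    {n N : ℕ} (h : n < N) :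
    coeff n (F.subst G) = ∑ i ∈ Finset.range N, coeff i F * coeff n (G ^ i) := by
  rw [coeff_subst' (HasSubst.of_constantCoeff_zero' hG)]
  refine finsum_eq_sum_of_support_subset _ fun i hi => ?_
  by_contra hiN
  exact hi (show coeff i F • coeff n (G ^ i) = 0 by
    rw [coeff_pow_eq_zero_of_lt hG (by simp at hiN; omega), smul_zero])

theorem constantCoeff_subst_of_constantCoeff_zero {G : R⟦X⟧} (hG : constantCoeff G = 0)
    (F : R⟦X⟧) : constantCoeff (F.subst G) = constantCoeff F := by
  simpa using coeff_subst_eq_sum_range hG F zero_lt_one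

theorem coeff_subst_mul {G : R⟦X⟧} (hG : constantCoeff G = 0) (F H : R⟦X⟧) (n : ℕ) :
    coeff n (F.subst G * H) = ∑ i ∈ Finset.range (n + 1), coeff i F * coeff n (G ^ i * H) := by
  simp only [coeff_mul, Finset.mul_sum]
  rw [Finset.sum_comm]
  refine Finset.sum_congr rfl fun p hp => ?_
  rw [coeff_subst_eq_sum_range hG F (show p.1 < n + 1 by have := mem_antidiagonal.mp hp; omega),
    Finset.sum_mul]
  exact Finset.sum_congr rfl fun i _ => mul_assoc _ _ _

theorem subst_subst_of_subst_eq_X {F G H : R⟦X⟧} (hG : constantCoeff G = 0)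
    (hH : constantCoeff H = 0) (hGH : G.subst H = X) : subst H (F.subst G) = F := by
  rw [subst_comp_subst_apply (HasSubst.of_constantCoeff_zero' hG)
    (HasSubst.of_constantCoeff_zero hH), hGH, X_subst]

end CommRing

theorem subst_inv {k : Type*} [Field k] {G P : k⟦X⟧} (hG : constantCoeff G = 0)
    (hP : constantCoeff P ≠ 0) : P⁻¹.subst G = (P.subst G)⁻¹ := by
  have hPG : constantCoeff (P.subst G) ≠ 0 := by
    rwa [constantCoeff_subst_of_constantCoeff_zero hG]
  rw [eq_inv_iff_mul_eq_one hPG, ← subst_mul (HasSubst.of_constantCoeff_zero' hG),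
    PowerSeries.inv_mul_cancel P hP, ← coe_substAlgHom (HasSubst.of_constantCoeff_zero' hG),
    map_one]

end PowerSeries

theorem psComp_eq_subst {G : PowerSeries ℂ} (hG : constantCoeff G = 0) (F : PowerSeries ℂ) :
    psComp F G = F.subst G := by
  ext n
  rw [psComp, coeff_mk, coeff_subst_eq_sum_range hG F (Nat.lt_succ_self n)]

section IteratedComposition

variable {φ ψ : PowerSeries ℂ}

theorem iterComp_succ_eq_subst (hψ : constantCoeff ψ = 0) (s : ℕ) :
    iterComp ψ (s + 1) = (iterComp ψ s).subst ψ :=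
  psComp_eq_subst hψ _

theorem constantCoeff_iterComp (hψ : constantCoeff ψ = 0) (s : ℕ) :
    constantCoeff (iterComp ψ s) = 0 := by
  induction s with
  | zero => exact constantCoeff_X
  | succ s ih => rw [iterComp_succ_eq_subst hψ, constantCoeff_subst_of_constantCoeff_zero hψ, ih]

theorem subst_iterComp_succ (hφ : constantCoeff φ = 0) (hψ : constantCoeff ψ = 0)
    (hψφ : ψ.subst φ = X) (s : ℕ) : (iterComp ψ (s + 1)).subst φ = iterComp ψ s := by
  rw [iterComp_succ_eq_subst hψ]
  exact subst_subst_of_subst_eq_X hψ hφ hψφ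

def compProd (g ψ : PowerSeries ℂ) (s : ℕ) : PowerSeries ℂ :=
  ∏ i ∈ range s, psComp g (iterComp ψ (i + 1))

theorem constantCoeff_compProd (g : PowerSeries ℂ) (hψ : constantCoeff ψ = 0) (s : ℕ) :
    constantCoeff (compProd g ψ s) = constantCoeff g ^ s := by
  simp only [compProd, map_prod, psComp_eq_subst (constantCoeff_iterComp hψ _),
    constantCoeff_subst_of_constantCoeff_zero (constantCoeff_iterComp hψ _), prod_const,
    card_range]

theorem subst_compProd_succ (g : PowerSeries ℂ) (hφ : constantCoeff φ = 0)
    (hψ : constantCoeff ψ = 0) (hψφ : ψ.subst φ = X) (s : ℕ) :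
    (compProd g ψ (s + 1)).subst φ = g * compProd g ψ s := by
  have hterm : ∀ i, subst φ (psComp g (iterComp ψ (i + 1))) = psComp g (iterComp ψ i) := by
    intro i
    simp only [psComp_eq_subst (constantCoeff_iterComp hψ _)]
    rw [subst_comp_subst_apply (HasSubst.of_constantCoeff_zero' (constantCoeff_iterComp hψ _))
        (HasSubst.of_constantCoeff_zero hφ), subst_iterComp_succ hφ hψ hψφ]
  rw [compProd, compProd, ← coe_substAlgHom (HasSubst.of_constantCoeff_zero' hφ), map_prod,
    prod_range_succ']
  simp only [coe_substAlgHom, hterm]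
  rw [iterComp, psComp_eq_subst constantCoeff_X, X_subst, mul_comm]

theorem subst_iterComp_pow_mul_inv_compProd_mul {g : PowerSeries ℂ} (hφ : constantCoeff φ = 0)
    (hψ : constantCoeff ψ = 0) (hψφ : ψ.subst φ = X) (hg : constantCoeff g ≠ 0) (s k : ℕ) :
    ((iterComp ψ (s + 1)) ^ k * (compProd g ψ (s + 1))⁻¹).subst φ * g
      = (iterComp ψ s) ^ k * (compProd g ψ s)⁻¹ := by
  have hφ' := HasSubst.of_constantCoeff_zero' hφ
  have hQ : ∀ t, constantCoeff (compProd g ψ t) ≠ 0 := fun t => by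
    rw [constantCoeff_compProd g hψ]; exact pow_ne_zero t hg
  rw [subst_mul hφ', subst_pow hφ', subst_inv hφ (hQ _), subst_iterComp_succ hφ hψ hψφ,
    subst_compProd_succ g hφ hψ hψφ, PowerSeries.mul_inv_rev, mul_assoc, mul_assoc,
    PowerSeries.inv_mul_cancel g hg, mul_one]

end IteratedComposition

section TriangularMatrices

theorem triMul_assoc (X Y Z : ℕ → ℕ → ℂ) :
    triMul (triMul X Y) Z = triMul X (triMul Y Z) := by
  ext k n
  simp only [triMul, sum_mul, mul_sum, mul_assoc]
  exact sum_comm' fun j i => by simp only [mem_Icc]; omega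

theorem triMul_congr {X X' Y Y' : ℕ → ℕ → ℂ} {k n : ℕ}
    (hX : ∀ j ∈ Icc k n, X k j = X' k j) (hY : ∀ j ∈ Icc k n, Y j n = Y' j n) :
    triMul X Y k n = triMul X' Y' k n :=
  sum_congr rfl fun j hj => by rw [hX j hj, hY j hj]

theorem triMul_triId (X : ℕ → ℕ → ℂ) {k n : ℕ} (hkn : k ≤ n) : triMul X triId k n = X k n := by
  rw [triMul, sum_eq_single_of_mem n (right_mem_Icc.mpr hkn)]
  · simp [triId]
  · intro j _ hjn
    simp [triId, hjn]

theorem triPow_eq_of_triMul_succ_eq {A B : ℕ → ℕ → ℂ} {M : ℕ → ℕ → ℕ → ℂ}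
    (hM : ∀ k n, 1 ≤ k → M 0 k n = triId k n)
    (hMA : ∀ s k n, 1 ≤ k → triMul (M (s + 1)) A k n = M s k n)
    (hAB : ∀ k n, 1 ≤ k → 1 ≤ n → triMul A B k n = triId k n) (s : ℕ) {k n : ℕ} (hk : 1 ≤ k)
    (hkn : k ≤ n) : triPow B s k n = M s k n := by
  induction s generalizing n with
  | zero => exact (hM k n hk).symm
  | succ s ih =>
    calc triPow B (s + 1) k n
        = triMul (triMul (M (s + 1)) A) B k n :=
          triMul_congr (fun j hj => by rw [ih (mem_Icc.mp hj).1, hMA s k j hk]) fun _ _ => rfl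
      _ = triMul (M (s + 1)) triId k n := by
          rw [triMul_assoc]
          exact triMul_congr (fun _ _ => rfl) fun j hj =>
            hAB j n (hk.trans (mem_Icc.mp hj).1) (hk.trans hkn)
      _ = M (s + 1) k n := triMul_triId _ hkn

end TriangularMatrices

section CoefficientMatrices

/-- The factor `(a_k / a_n) · n! / k!` by which the matrices of the statement differ from the
coefficient arrays `[t^n] F_k` of their row series. -/
def coeffWeight (a : ℕ → ℂ) (k n : ℕ) : ℂ :=
  a k / a n * (1 / k.factorial) * n.factorial

variable {a : ℕ → ℂ}

theorem coeffWeight_self {k : ℕ} (hk : a k ≠ 0) : coeffWeight a k k = 1 := by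
  have : (k.factorial : ℂ) ≠ 0 := Nat.cast_ne_zero.mpr k.factorial_ne_zero
  simp [coeffWeight, hk, this]

theorem coeffWeight_mul_coeffWeight {j : ℕ} (hj : a j ≠ 0) (k n : ℕ) :
    coeffWeight a k j * coeffWeight a j n = coeffWeight a k n := by
  have : (j.factorial : ℂ) ≠ 0 := Nat.cast_ne_zero.mpr j.factorial_ne_zero
  simp only [coeffWeight]
  field_simp

theorem sum_coeffWeight_mul_coeff_pow_mul {k m : ℕ} (ha : ∀ i ∈ Icc k m, a i ≠ 0)
    {φ F : PowerSeries ℂ} (hφ : constantCoeff φ = 0) (hF : ∀ i < k, coeff i F = 0)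
    (g : PowerSeries ℂ) :
    ∑ i ∈ Icc k m, coeffWeight a k i * coeff i F * (coeffWeight a i m * coeff m (φ ^ i * g))
      = coeffWeight a k m * coeff m (F.subst φ * g) := by
  rw [coeff_subst_mul hφ, mul_sum]
  refine sum_subset_zero_on_sdiff (fun i hi => by simp at hi ⊢; omega)
    (fun i hi => ?_) (fun i hi => ?_)
  · rw [hF i (by simp at hi; omega), zero_mul, mul_zero]
  · rw [← coeffWeight_mul_coeffWeight (ha i hi) k m]
    ring

def invPowMatrix (a : ℕ → ℂ) (ψ g : PowerSeries ℂ) (s : ℕ) : ℕ → ℕ → ℂ :=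
  fun k n => coeffWeight a k n * coeff n ((iterComp ψ s) ^ k * (compProd g ψ s)⁻¹)

theorem invPowMatrix_zero (ψ g : PowerSeries ℂ) {k : ℕ} (hk : a k ≠ 0) (n : ℕ) :
    invPowMatrix a ψ g 0 k n = triId k n := by
  rw [invPowMatrix, iterComp, compProd, prod_range_zero, inv_one, mul_one, coeff_X_pow, triId]
  rcases eq_or_ne n k with rfl | hnk
  · simp [coeffWeight_self hk]
  · simp [hnk, hnk.symm]

theorem triMul_invPowMatrix_succ (ha : ∀ n, 1 ≤ n → a n ≠ 0) {φ ψ g : PowerSeries ℂ}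
    (hφ : constantCoeff φ = 0) (hψ : constantCoeff ψ = 0) (hψφ : ψ.subst φ = X)
    (hg : constantCoeff g ≠ 0) {A : ℕ → ℕ → ℂ}
    (hA : ∀ k n, 1 ≤ k → k ≤ n → A k n = coeffWeight a k n * coeff n (φ ^ k * g))
    (s : ℕ) {k : ℕ} (hk : 1 ≤ k) (m : ℕ) :
    triMul (invPowMatrix a ψ g (s + 1)) A k m = invPowMatrix a ψ g s k m := by
  rw [invPowMatrix, ← subst_iterComp_pow_mul_inv_compProd_mul hφ hψ hψφ hg,
    ← sum_coeffWeight_mul_coeff_pow_mul (fun i hi => ha i (hk.trans (mem_Icc.mp hi).1)) hφ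
      (fun i hi => coeff_pow_mul_eq_zero_of_lt (constantCoeff_iterComp hψ _) _ hi)]
  exact sum_congr rfl fun i hi => by
    rw [hA i m (hk.trans (mem_Icc.mp hi).1) (mem_Icc.mp hi).2, invPowMatrix]

end CoefficientMatrices

theorem stmt6_general (a : ℕ → ℂ) (ha : ∀ n, 1 ≤ n → a n ≠ 0)
    (φ g : PowerSeries ℂ)
    (hφ0 : constantCoeff φ = 0)
    (hne : constantCoeff (derivativeFun φ) * constantCoeff g ≠ 0)
    (ψ : PowerSeries ℂ) (hψ0 : constantCoeff ψ = 0)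
    (hψφ : psComp ψ φ = PowerSeries.X)
    (A B : ℕ → ℕ → ℂ)
    (hA : ∀ k n, 1 ≤ k → k ≤ n →
      A k n = a k / a n * (1 / k.factorial) *
        ((n.factorial : ℂ) * coeff n (φ ^ k * g)))
    (hAB : ∀ k n, 1 ≤ k → 1 ≤ n → triMul A B k n = triId k n)
    (s : ℕ) (k n : ℕ) (hk : 1 ≤ k) (hkn : k ≤ n) :
    triPow B s k n = a k / a n * (1 / k.factorial) *
      ((n.factorial : ℂ) * coeff n ((iterComp ψ s) ^ k *
        (∏ i ∈ Finset.range s, psComp g (iterComp ψ (i + 1)))⁻¹)) := by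
  have hψφ' : ψ.subst φ = X := by rwa [← psComp_eq_subst hφ0]
  have hA' : ∀ k n, 1 ≤ k → k ≤ n → A k n = coeffWeight a k n * coeff n (φ ^ k * g) :=
    fun k n hk hkn => by rw [hA k n hk hkn, coeffWeight]; ring
  have hg : constantCoeff g ≠ 0 := right_ne_zero_of_mul hne
  rw [triPow_eq_of_triMul_succ_eq (fun k n hk => invPowMatrix_zero ψ g (ha k hk) n)
    (fun s k m hk => triMul_invPowMatrix_succ ha hφ0 hψ0 hψφ' hg hA' s hk m) hAB s hk hkn]
  rw [invPowMatrix, coeffWeight, mul_assoc, compProd]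

/-- Corollary (h = 1, inverse): if `φ'(0)·g(0) ≠ 0`, `ψ = φ^⟨-1⟩`, and `B` is an upper
triangular two-sided inverse of `A`, then
`[B^s]_{k,n} = (a_k/a_n)·(1/k!)·(d/dt)^n_{t=0}[(ψ^⟨s⟩(t))^k·(g(ψ(t))·g(ψ^⟨2⟩(t))⋯g(ψ^⟨s⟩(t)))^{-1}]`. -/
theorem stmt6 (a : ℕ → ℂ) (ha : ∀ n, 1 ≤ n → a n ≠ 0)
    (φ g : PowerSeries ℂ)
    (hφ0 : constantCoeff φ = 0)
    (hne : constantCoeff (derivativeFun φ) * constantCoeff g ≠ 0)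
    (ψ : PowerSeries ℂ) (hψ0 : constantCoeff ψ = 0)
    (hψφ : psComp ψ φ = PowerSeries.X) (hφψ : psComp φ ψ = PowerSeries.X)
    (A B : ℕ → ℕ → ℂ)
    (hAtri : ∀ k n, n < k → A k n = 0)
    (hBtri : ∀ k n, n < k → B k n = 0)
    (hA : ∀ k n, 1 ≤ k → k ≤ n →
      A k n = a k / a n * (1 / k.factorial) *
        ((n.factorial : ℂ) * coeff n (φ ^ k * g)))
    (hAB : ∀ k n, 1 ≤ k → 1 ≤ n → triMul A B k n = triId k n)
    (hBA : ∀ k n, 1 ≤ k → 1 ≤ n → triMul B A k n = triId k n)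
    (s : ℕ) (k n : ℕ) (hk : 1 ≤ k) (hkn : k ≤ n) :
    triPow B s k n = a k / a n * (1 / k.factorial) *
      ((n.factorial : ℂ) * coeff n ((iterComp ψ s) ^ k *
        (∏ i ∈ Finset.range s, psComp g (iterComp ψ (i + 1)))⁻¹)) :=
  stmt6_general a ha φ g hφ0 hne ψ hψ0 hψφ A B hA hAB s k n hk hkn
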